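/- Let k ≥ 2 be an integer. Then for every positive integer i, every k-breakable class of graphs is (2^{i+1}(k−1), 0, 1/2^i)-breakable, where 0 denotes the constant zero function. -/

import Mathlib

open scoped BigOperators
open SimpleGraph

attribute [local instance] Classical.propDecidable

namespace ArxivFormal

/-- The closed neighborhood `N[X]` of a set of vertices `X`. -/
def closedNbhd {V : Type} (G : SimpleGraph V) (X : Set V) : Set V :=
  X ∪ {v | ∃ x ∈ X, G.Adj x v}

/-- The open neighborhood of the set `X` inside the ambient vertex set `A`
(i.e. computed in the induced subgraph `G[A]`). -/
def openNbhdIn {V : Type} (G : SimpleGraph V) (A X : Set V) : Set V :=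
  {v | v ∈ A ∧ v ∉ X ∧ ∃ x ∈ X, G.Adj x v}

/-- Two (disjoint) vertex sets are anticomplete if there are no edges between them. -/
def Anticomplete {V : Type} (G : SimpleGraph V) (X Y : Set V) : Prop :=
  Disjoint X Y ∧ ∀ x ∈ X, ∀ y ∈ Y, ¬ G.Adj x y

/-- `alphaOn G S` is the stability (independence) number of `G[S]`. -/
noncomputable def alphaOn {V : Type} [Fintype V] (G : SimpleGraph V) (S : Set V) : ℕ :=
  sSup {n | ∃ I : Finset V, ↑I ⊆ S ∧ (∀ u ∈ I, ∀ v ∈ I, ¬ G.Adj u v) ∧ I.card = n}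

/-- The weight `w(S)` of a set of vertices. -/
noncomputable def setWeight {V : Type} [Fintype V] (w : V → ℝ) (S : Set V) : ℝ :=
  ∑ v ∈ Finset.univ.filter (fun v => v ∈ S), w v

/-- A weight function takes values in `[0,1]` and has total weight at most `1`. -/
def IsWeightFunction {V : Type} [Fintype V] (w : V → ℝ) : Prop :=
  (∀ v, 0 ≤ w v ∧ w v ≤ 1) ∧ ∑ v, w v ≤ 1

/-- A normal weight function has total weight exactly `1`. -/
def IsNormalWeightFunction {V : Type} [Fintype V] (w : V → ℝ) : Prop :=
  (∀ v, 0 ≤ w v ∧ w v ≤ 1) ∧ ∑ v, w v = 1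

/-- The vertex set (as a subset of the ambient vertex set) of the connected component `c`
of the induced subgraph `G[A]`. -/
def componentSet {V : Type} (G : SimpleGraph V) (A : Set V)
    (c : (G.induce A).ConnectedComponent) : Set V :=
  {v | ∃ h : v ∈ A, (G.induce A).connectedComponentMk ⟨v, h⟩ = c}

/-- `X` is a `(w,c)`-balanced separator of the induced subgraph `G[B]`:
every component of `G[B] ∖ X` has weight at most `c`. -/
def IsSepWithin {V : Type} [Fintype V] (G : SimpleGraph V) (w : V → ℝ) (c : ℝ)
    (B X : Set V) : Prop :=
  ∀ comp : (G.induce (B \ X)).ConnectedComponent,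
    setWeight w (componentSet G (B \ X) comp) ≤ c

/-- `X` is a `(w,c)`-balanced separator of `G`. -/
def IsBalancedSeparator {V : Type} [Fintype V] (G : SimpleGraph V) (w : V → ℝ)
    (c : ℝ) (X : Set V) : Prop :=
  IsSepWithin G w c Set.univ X

/-- `G` contains no induced copy of `H`. -/
def IndFree {V W : Type} (G : SimpleGraph V) (H : SimpleGraph W) : Prop :=
  IsEmpty (H ↪g G)

/-- The graph `S_{t,t,t}`: the claw `K_{1,3}` with every edge subdivided `t-1` times,
i.e. three paths with `t` edges each, glued at a common center. -/
def subClaw (t : ℕ) : SimpleGraph (Unit ⊕ Fin 3 × Fin t) :=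
  SimpleGraph.fromRel fun a b =>
    match a, b with
    | Sum.inl _, Sum.inr p => (p.2 : ℕ) = 0
    | Sum.inr p, Sum.inr q => p.1 = q.1 ∧ (p.2 : ℕ) + 1 = (q.2 : ℕ)
    | _, _ => False

/-- The complete bipartite graph `K_{t,t}`. -/
def Ktt (t : ℕ) : SimpleGraph (Fin t ⊕ Fin t) := completeBipartiteGraph (Fin t) (Fin t)

/-- The `t`-by-`t` hexagonal grid (wall): a brick-wall graph with horizontal paths joined by
vertical edges whose positions alternate between consecutive rows. -/
def wall (t : ℕ) : SimpleGraph (Fin (t + 1) × Fin (2 * t + 2)) :=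
  SimpleGraph.fromRel fun a b =>
    (a.1 = b.1 ∧ (a.2 : ℕ) + 1 = (b.2 : ℕ)) ∨
    ((a.1 : ℕ) + 1 = (b.1 : ℕ) ∧ a.2 = b.2 ∧ ((a.1 : ℕ) + (a.2 : ℕ)) % 2 = 0)

/-- The graph obtained from `W` by subdividing the edge `uv` once (the new vertex is `none`). -/
def subdivideEdge {β : Type} (W : SimpleGraph β) (u v : β) : SimpleGraph (Option β) :=
  SimpleGraph.fromRel fun a b =>
    (∃ x y : β, a = some x ∧ b = some y ∧ W.Adj x y ∧ s(x, y) ≠ s(u, v)) ∨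
    (a = none ∧ (b = some u ∨ b = some v))

/-- `IsSubdivisionOf G W` : `G` is (isomorphic to) a graph obtained from `W` by
repeatedly subdividing edges. -/
inductive IsSubdivisionOf : {α : Type} → {β : Type} → SimpleGraph α → SimpleGraph β → Prop
  | of_iso {α β : Type} {G : SimpleGraph α} {W : SimpleGraph β} :
      (G ≃g W) → IsSubdivisionOf G W
  | step {α β : Type} {G : SimpleGraph α} {W : SimpleGraph β} {u v : β} :
      W.Adj u v → IsSubdivisionOf G (subdivideEdge W u v) → IsSubdivisionOf G W

/-- `G` contains no induced copy of the line graph of any subdivision of the `t×t` wall,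
i.e. `G` is `𝓛_t`-free. -/
def LFree (t : ℕ) {V : Type} (G : SimpleGraph V) : Prop :=
  ∀ (β : Type) (H : SimpleGraph β), IsSubdivisionOf H (wall t) → IndFree G (lineGraph H)

/-- Membership in `𝓜_t`: `G` is `(𝓛_t ∪ {S_{t,t,t}, K_{t,t}})`-free. -/
def InM (t : ℕ) {V : Type} (G : SimpleGraph V) : Prop :=
  LFree t G ∧ IndFree G (subClaw t) ∧ IndFree G (Ktt t)

/-- Membership in `𝓜_t*`: `G` is `(𝓛_t ∪ {S_{t,t,t}})`-free. -/
def InMstar (t : ℕ) {V : Type} (G : SimpleGraph V) : Prop :=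
  LFree t G ∧ IndFree G (subClaw t)

/-- A tree decomposition of `G`. -/
structure TreeDecomp {V : Type} (G : SimpleGraph V) where
  ι : Type
  tree : SimpleGraph ι
  isTree : tree.IsTree
  bag : ι → Set V
  mem_bag : ∀ v : V, ∃ i, v ∈ bag i
  edge_bag : ∀ ⦃u v : V⦄, G.Adj u v → ∃ i, u ∈ bag i ∧ v ∈ bag i
  bag_connected : ∀ v : V, (tree.induce {i | v ∈ bag i}).Connected

/-- An extended strip decomposition of `(G, Z)` with pattern `H`. -/
structure ESD {α β : Type} (G : SimpleGraph α) (Z : Set α) (H : SimpleGraph β) where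
  vMap : β → Set α
  eMap : H.edgeSet → Set α
  tMap : {T : Finset β // H.IsNClique 3 T} → Set α
  evMap : H.edgeSet → β → Set α
  evMap_eq_empty : ∀ (e : H.edgeSet) (v : β), v ∉ (e : Sym2 β) → evMap e v = ∅
  evMap_subset : ∀ (e : H.edgeSet) (v : β), evMap e v ⊆ eMap e
  covers : ∀ x : α, (∃ v, x ∈ vMap v) ∨ (∃ e, x ∈ eMap e) ∨ (∃ T, x ∈ tMap T)
  disj_vv : ∀ v v', v ≠ v' → Disjoint (vMap v) (vMap v')
  disj_ee : ∀ e e', e ≠ e' → Disjoint (eMap e) (eMap e')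
  disj_tt : ∀ T T', T ≠ T' → Disjoint (tMap T) (tMap T')
  disj_ve : ∀ v e, Disjoint (vMap v) (eMap e)
  disj_vt : ∀ v T, Disjoint (vMap v) (tMap T)
  disj_et : ∀ e T, Disjoint (eMap e) (tMap T)
  adj_iff : ∀ (e f : H.edgeSet), e ≠ f → ∀ x ∈ eMap e, ∀ y ∈ eMap f,
    (G.Adj x y ↔ ∃ v : β, v ∈ (e : Sym2 β) ∧ v ∈ (f : Sym2 β) ∧
      x ∈ evMap e v ∧ y ∈ evMap f v)
  vertex_bd : ∀ (v : β) (x y : α), x ∈ vMap v → y ∉ vMap v → G.Adj x y →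
    ∃ e : H.edgeSet, v ∈ (e : Sym2 β) ∧ y ∈ evMap e v
  triangle_bd : ∀ (T : {T : Finset β // H.IsNClique 3 T}) (x y : α),
    x ∈ tMap T → y ∉ tMap T → G.Adj x y →
    ∃ u v : β, u ≠ v ∧ u ∈ T.1 ∧ v ∈ T.1 ∧
      ∃ e : H.edgeSet, (e : Sym2 β) = s(u, v) ∧ y ∈ evMap e u ∧ y ∈ evMap e v
  leaves_equiv : Nonempty (Z ≃ {w : β // ∃! u, H.Adj w u})
  leaves_map : ∀ z ∈ Z, ∃ w : β, (∃! u, H.Adj w u) ∧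
    ∀ e : H.edgeSet, w ∈ (e : Sym2 β) → evMap e w = {z}

namespace ESD

variable {α β : Type} {G : SimpleGraph α} {Z : Set α} {H : SimpleGraph β}

/-- `η` is faithful: for every edge `uv` of `H` there is an `e`-rung,
an induced path inside `η(e)` from `η(e,v)` to `η(e,u)` whose internal vertices avoid
`η(e,u) ∪ η(e,v)`. -/
def IsFaithful (η : ESD G Z H) : Prop :=
  ∀ (u v : β) (h : H.Adj u v), ∃ (k : ℕ) (hk : 0 < k) (p : Fin k → α),
    Function.Injective p ∧
    (∀ i j : Fin k, (i : ℕ) < (j : ℕ) → (G.Adj (p i) (p j) ↔ (j : ℕ) = (i : ℕ) + 1)) ∧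
    (∀ i, p i ∈ η.eMap ⟨s(u, v), H.mem_edgeSet.mpr h⟩) ∧
    p ⟨0, hk⟩ ∈ η.evMap ⟨s(u, v), H.mem_edgeSet.mpr h⟩ v ∧
    p ⟨k - 1, Nat.sub_lt hk Nat.one_pos⟩ ∈ η.evMap ⟨s(u, v), H.mem_edgeSet.mpr h⟩ u ∧
    ∀ i : Fin k, (i : ℕ) ≠ 0 → (i : ℕ) ≠ k - 1 →
      p i ∉ η.evMap ⟨s(u, v), H.mem_edgeSet.mpr h⟩ u ∧
      p i ∉ η.evMap ⟨s(u, v), H.mem_edgeSet.mpr h⟩ v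

/-- `η.IsAtomBd A Δ` : `A` is an atom of `η` with boundary `Δ`. -/
def IsAtomBd (η : ESD G Z H) (A Δ : Set α) : Prop :=
  (∃ v : β, A = η.vMap v ∧
    Δ = {x | ∃ e : H.edgeSet, v ∈ (e : Sym2 β) ∧ x ∈ η.evMap e v}) ∨
  (∃ T, A = η.tMap T ∧
    Δ = {x | ∃ u v : β, u ≠ v ∧ u ∈ T.1 ∧ v ∈ T.1 ∧
      ∃ e : H.edgeSet, (e : Sym2 β) = s(u, v) ∧ x ∈ η.evMap e u ∧ x ∈ η.evMap e v}) ∨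
  (∃ (u v : β) (h : H.Adj u v),
    A = η.eMap ⟨s(u, v), H.mem_edgeSet.mpr h⟩ \
        (η.evMap ⟨s(u, v), H.mem_edgeSet.mpr h⟩ u ∪ η.evMap ⟨s(u, v), H.mem_edgeSet.mpr h⟩ v) ∧
    Δ = η.evMap ⟨s(u, v), H.mem_edgeSet.mpr h⟩ u ∪ η.evMap ⟨s(u, v), H.mem_edgeSet.mpr h⟩ v)

/-- `A` is an atom of `η`. -/
def IsAtom (η : ESD G Z H) (A : Set α) : Prop := ∃ Δ, η.IsAtomBd A Δ

end ESD
/-- A class of (finite) graphs. -/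
def GraphClass : Type 1 := ∀ (V : Type) [Fintype V], SimpleGraph V → Prop

/-- The class `𝓒` is closed under taking induced subgraphs. -/
def GraphClass.ClosedUnderInduced (𝓒 : GraphClass) : Prop :=
  ∀ (V : Type) [Fintype V] (G : SimpleGraph V) (S : Set V) [Fintype S],
    𝓒 V G → 𝓒 S (G.induce S)

/-- `G` is `k`-breakable: for every weight function there is a `w`-balanced separator
with a core of size strictly less than `k`. -/
def KBreakableGraph {V : Type} [Fintype V] (G : SimpleGraph V) (k : ℕ) : Prop :=
  ∀ w : V → ℝ, IsWeightFunction w → ∃ (Y : Set V) (X : Finset V),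
    X.card < k ∧ Y ⊆ closedNbhd G ↑X ∧ IsBalancedSeparator G w (1 / 2) Y

/-- A `k`-breakable class of graphs. -/
def GraphClass.KBreakable (𝓒 : GraphClass) (k : ℕ) : Prop :=
  𝓒.ClosedUnderInduced ∧
  ∀ (V : Type) [Fintype V] (G : SimpleGraph V), 𝓒 V G → KBreakableGraph G k

/-- `(S, C)` is a `(w, ε)`-boosted separator of `G`: for a maximum-weight component `B`
of `G ∖ C`, either `w(B) ≤ 1/2` or `S ∩ B` is a `(w, ε)`-balanced separator of `G[B]`. -/
def IsBoostedSeparator {V : Type} [Fintype V] (G : SimpleGraph V) (w : V → ℝ) (ε : ℝ)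
    (S C : Set V) : Prop :=
  ∀ b : (G.induce Cᶜ).ConnectedComponent,
    (∀ b', setWeight w (componentSet G Cᶜ b') ≤ setWeight w (componentSet G Cᶜ b)) →
    (setWeight w (componentSet G Cᶜ b) ≤ 1 / 2 ∨
      IsSepWithin G w ε (componentSet G Cᶜ b) (S ∩ componentSet G Cᶜ b))

/-- `G` is `(k, f, ε)`-breakable. -/
def KFEBreakableGraph {V : Type} [Fintype V] (G : SimpleGraph V) (k : ℕ) (f : ℕ → ℝ)
    (ε : ℝ) : Prop :=
  ∀ w : V → ℝ, IsWeightFunction w → ∃ (S C : Set V) (X : Finset V),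
    X.card ≤ k ∧ S ⊆ closedNbhd G ↑X ∧ IsBoostedSeparator G w ε S C ∧
    (alphaOn G C : ℝ) ≤ f (Fintype.card V)

/-- A `(k, f, ε)`-breakable class of graphs. -/
def GraphClass.KFEBreakable (𝓒 : GraphClass) (k : ℕ) (f : ℕ → ℝ) (ε : ℝ) : Prop :=
  𝓒.ClosedUnderInduced ∧
  ∀ (V : Type) [Fintype V] (G : SimpleGraph V), 𝓒 V G → KFEBreakableGraph G k f ε

section Problematic

variable {V : Type} [Fintype V]

/-- For a vertex `x` and a component `b` of `G[A] ∖ N[X]`, the quantity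
`α(N(x) ∩ N(B))`, all computed in the graph `G[A]`. -/
noncomputable def probAlpha (G : SimpleGraph V) (A : Set V) (X : Finset V) (x : V)
    (b : (G.induce (A \ closedNbhd G ↑X)).ConnectedComponent) : ℕ :=
  alphaOn G (G.neighborSet x ∩
    openNbhdIn G A (componentSet G (A \ closedNbhd G ↑X) b))

/-- `β(G[A], X)`: the largest `β` for which an `(X, β)`-problematic pair exists in `G[A]`
(and `0` if there is none). -/
noncomputable def maxBetaIn (G : SimpleGraph V) (w : V → ℝ) (ε : ℝ) (A : Set V)
    (X : Finset V) : ℕ :=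
  Finset.sup Finset.univ
    (fun p : V × (G.induce (A \ closedNbhd G ↑X)).ConnectedComponent =>
      if p.1 ∈ X ∧ ε < setWeight w (componentSet G (A \ closedNbhd G ↑X) p.2)
      then probAlpha G A X p.1 p.2 else 0)

/-- `W(G[A], X, β)`: the total weight of big components appearing in `(X, 3β/4)`-problematic
pairs of `G[A]`. -/
noncomputable def probWeightIn (G : SimpleGraph V) (w : V → ℝ) (ε : ℝ) (A : Set V)
    (X : Finset V) (β : ℝ) : ℝ :=
  ∑ x ∈ X, ∑ b : (G.induce (A \ closedNbhd G ↑X)).ConnectedComponent,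
    if ε < setWeight w (componentSet G (A \ closedNbhd G ↑X) b) ∧
       3 * β / 4 ≤ (probAlpha G A X x b : ℝ)
    then setWeight w (componentSet G (A \ closedNbhd G ↑X) b) else 0

end Problematic

/-- The `2`-subdivision of a graph: every edge is replaced by a three-edge path. The two
internal vertices of the path replacing an edge are the two darts of that edge. -/
def twoSubdivision {V : Type} (H : SimpleGraph V) : SimpleGraph (V ⊕ H.Dart) :=
  SimpleGraph.fromRel fun a b =>
    match a, b with
    | Sum.inl u, Sum.inr d => d.toProd.1 = u
    | Sum.inr d, Sum.inr d' => d' = d.symm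
    | _, _ => False

/-- `K_γ^{(2)}`, the `2`-subdivision of the complete graph on `γ` vertices. -/
def Kgamma2 (γ : ℕ) : SimpleGraph (Fin γ ⊕ (⊤ : SimpleGraph (Fin γ)).Dart) :=
  twoSubdivision (⊤ : SimpleGraph (Fin γ))

/-- `(A, B)` forms a `K_{s,t}` in `G` with respect to `Y`. -/
def IsKstWrt {V : Type} (G : SimpleGraph V) (s t : ℕ) (Y : Set V)
    (A B : Finset V) : Prop :=
  A.card = s ∧ B.card = t ∧ Disjoint A B ∧ ↑B ⊆ Y ∧
  (∀ u ∈ A, ∀ v ∈ A, ¬ G.Adj u v) ∧ (∀ u ∈ B, ∀ v ∈ B, ¬ G.Adj u v) ∧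
  (∀ u ∈ A, ∀ v ∈ B, G.Adj u v)

/-- `G` is `K_{s,t}`-free with respect to `Y`. -/
def KstFreeWrt {V : Type} (G : SimpleGraph V) (s t : ℕ) (Y : Set V) : Prop :=
  ¬ ∃ A B : Finset V, IsKstWrt G s t Y A B

/-- `p` enumerates the vertices of an induced path in `G`. -/
def IsPathSeq {V : Type} (G : SimpleGraph V) (k : ℕ) (p : Fin k → V) : Prop :=
  Function.Injective p ∧
  ∀ i j : Fin k, (i : ℕ) < (j : ℕ) → (G.Adj (p i) (p j) ↔ (j : ℕ) = (i : ℕ) + 1)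

/-- `G` is a path. -/
def IsPathGraph {V : Type} (G : SimpleGraph V) : Prop :=
  ∃ n : ℕ, Nonempty (G ≃g SimpleGraph.pathGraph n)

/-- `G` is a caterpillar: a tree with maximum degree at most three in which some path
contains all vertices of degree three. -/
def IsCaterpillar {V : Type} (G : SimpleGraph V) : Prop :=
  G.IsTree ∧ (∀ v, (G.neighborSet v).ncard ≤ 3) ∧
  ∃ (k : ℕ) (p : Fin k → V), IsPathSeq G k p ∧
    ∀ v : V, (G.neighborSet v).ncard = 3 → ∃ i, p i = v

/-- `G` is a subdivided star. -/
def IsSubdividedStar {V : Type} (G : SimpleGraph V) : Prop :=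
  ∃ m : ℕ, IsSubdivisionOf G (completeBipartiteGraph Unit (Fin m))

/-- `G` is the line graph of a caterpillar. -/
def IsLineGraphOfCaterpillar {V : Type} (G : SimpleGraph V) : Prop :=
  ∃ (β : Type) (T : SimpleGraph β), Finite β ∧ IsCaterpillar T ∧ Nonempty (G ≃g lineGraph T)

/-- `G` is the line graph of a subdivided star. -/
def IsLineGraphOfSubdividedStar {V : Type} (G : SimpleGraph V) : Prop :=
  ∃ (β : Type) (T : SimpleGraph β), Finite β ∧ IsSubdividedStar T ∧
    Nonempty (G ≃g lineGraph T)

/-- The set `𝒵(G)` of vertices whose neighborhood is a clique. -/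
def cliqueVerts {V : Type} (G : SimpleGraph V) : Set V :=
  {v | (G.neighborSet v).Pairwise G.Adj}

/-- Membership in `𝒮`: a forest every component of which has at most three leaves. -/
def InS {V : Type} (T : SimpleGraph V) : Prop :=
  T.IsAcyclic ∧ ∀ c : T.ConnectedComponent,
    {v | T.connectedComponentMk v = c ∧ (T.neighborSet v).ncard = 1}.ncard ≤ 3

/-- The vertex set of a connected component of `G`. -/
def ccSet {V : Type} (G : SimpleGraph V) (c : G.ConnectedComponent) : Set V :=
  {v | G.connectedComponentMk v = c}

/-
Take `C = ∅`, so that it suffices to find a `(w, 2⁻ⁱ)`-balanced separator whose core has at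
most `2^{i+1}(k-1)` vertices. Such separators are built by induction on `i`. Given a
`(w, 2⁻ⁱ)`-balanced separator `Y`, at most `2^{i+1}` components `D` of `G ∖ Y` weigh more than
`2^{-(i+1)}`. Since the class is closed under induced subgraphs, `G[D]` is `k`-breakable, and
breaking it for the rescaled weight `w / w(D)` cuts `D` into pieces of weight at most
`w(D)/2 ≤ 2^{-(i+1)}`, using a core of at most `k - 1` further vertices.
-/

section Components

variable {V : Type} {G : SimpleGraph V}

lemma componentSet_subset {A : Set V} (c : (G.induce A).ConnectedComponent) :
    componentSet G A c ⊆ A :=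
  fun _ ⟨h, _⟩ => h

/-- A walk inside the component never leaves `T`, so it lifts to `G[T]`. -/
lemma exists_componentSet_superset {S T : Set V} {c : (G.induce S).ConnectedComponent}
    (h : componentSet G S c ⊆ T) :
    ∃ c' : (G.induce T).ConnectedComponent, componentSet G S c ⊆ componentSet G T c' := by
  induction c using ConnectedComponent.ind with
  | h a =>
    refine ⟨(G.induce T).connectedComponentMk ⟨a, h ⟨a.2, rfl⟩⟩, ?_⟩
    rintro u ⟨hu, hua⟩
    obtain ⟨p⟩ := ConnectedComponent.exact hua
    have hp : ∀ x ∈ (p.map (Embedding.induce S).toHom).support, x ∈ T := by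
      intro x hx
      rw [Walk.support_map, List.mem_map] at hx
      obtain ⟨y, hy, rfl⟩ := hx
      exact h ⟨y.2, (ConnectedComponent.sound ⟨p.takeUntil y hy⟩).symm.trans hua⟩
    exact ⟨hp u (Walk.start_mem_support _),
      ConnectedComponent.sound ⟨(p.map (Embedding.induce S).toHom).induce T hp⟩⟩

lemma closedNbhd_mono {X X' : Set V} (h : X ⊆ X') : closedNbhd G X ⊆ closedNbhd G X' := by
  rintro v (hv | ⟨x, hx, hxv⟩)
  · exact Or.inl (h hv)
  · exact Or.inr ⟨x, h hx, hxv⟩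

lemma image_val_subset_closedNbhd {D : Set V} {Y X : Set D}
    (h : Y ⊆ closedNbhd (G.induce D) X) :
    Subtype.val '' Y ⊆ closedNbhd G (Subtype.val '' X) := by
  rintro _ ⟨y, hy, rfl⟩
  rcases h hy with hy | ⟨x, hx, hxy⟩
  · exact Or.inl ⟨y, hy, rfl⟩
  · exact Or.inr ⟨x, ⟨x, hx, rfl⟩, hxy⟩

end Components

section Weights

variable {V : Type} [Fintype V] {G : SimpleGraph V} {w : V → ℝ}

lemma setWeight_mono (hw : ∀ v, 0 ≤ w v) {S T : Set V} (h : S ⊆ T) :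
    setWeight w S ≤ setWeight w T :=
  Finset.sum_le_sum_of_subset_of_nonneg (Finset.monotone_filter_right _ fun _ _ hv => h hv)
    fun v _ _ => hw v

lemma single_le_setWeight (hw : ∀ v, 0 ≤ w v) {S : Set V} {v : V} (hv : v ∈ S) :
    w v ≤ setWeight w S :=
  Finset.single_le_sum (fun u _ => hw u) (by simpa using hv)

lemma setWeight_div (t : ℝ) (S : Set V) :
    setWeight (fun v => w v / t) S = setWeight w S / t := by
  simp [setWeight, Finset.sum_div]

lemma setWeight_univ : setWeight w Set.univ = ∑ v, w v := by
  simp [setWeight]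

lemma setWeight_subtype_val {A : Set V} (S : Set A) :
    setWeight (fun x : A => w x) S = setWeight w (Subtype.val '' S) := by
  have himg : (Finset.univ.filter (· ∈ S)).image Subtype.val =
      Finset.univ.filter (· ∈ Subtype.val '' S) := by
    ext v
    simp
  rw [setWeight, setWeight, ← himg, Finset.sum_image fun x _ y _ h => Subtype.val_injective h]

lemma sum_setWeight_componentSet_le (hw : ∀ v, 0 ≤ w v) (A : Set V)
    (s : Finset (G.induce A).ConnectedComponent) :
    ∑ c ∈ s, setWeight w (componentSet G A c) ≤ setWeight w A := by
  have hdisj : (s : Set (G.induce A).ConnectedComponent).PairwiseDisjoint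
      fun c => Finset.univ.filter (· ∈ componentSet G A c) := by
    intro c _ c' _ hne
    refine Finset.disjoint_left.mpr fun v hv hv' => hne ?_
    obtain ⟨_, rfl⟩ := (Finset.mem_filter.mp hv).2
    obtain ⟨_, rfl⟩ := (Finset.mem_filter.mp hv').2
    rfl
  unfold setWeight
  rw [← Finset.sum_biUnion hdisj]
  refine Finset.sum_le_sum_of_subset_of_nonneg ?_ fun v _ _ => hw v
  intro v hv
  obtain ⟨c, _, hvc⟩ := Finset.mem_biUnion.mp hv
  exact Finset.mem_filter.mpr
    ⟨Finset.mem_univ v, componentSet_subset c (Finset.mem_filter.mp hvc).2⟩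

lemma card_mul_le_setWeight (hw : ∀ v, 0 ≤ w v) {A : Set V} {ε : ℝ}
    (s : Finset (G.induce A).ConnectedComponent)
    (hs : ∀ c ∈ s, ε ≤ setWeight w (componentSet G A c)) :
    s.card * ε ≤ setWeight w A :=
  calc s.card * ε = ∑ _c ∈ s, ε := by simp
    _ ≤ ∑ c ∈ s, setWeight w (componentSet G A c) := Finset.sum_le_sum hs
    _ ≤ setWeight w A := sum_setWeight_componentSet_le hw A s

lemma IsSepWithin.of_diff_subset (hw : ∀ v, 0 ≤ w v) {ε : ℝ} {A Y A' Y' : Set V}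
    (h : IsSepWithin G w ε A Y) (hsub : A' \ Y' ⊆ A \ Y) : IsSepWithin G w ε A' Y' := by
  intro c
  obtain ⟨c', hc'⟩ := exists_componentSet_superset ((componentSet_subset c).trans hsub)
  exact (setWeight_mono hw hc').trans (h c')

lemma IsBalancedSeparator.isSepWithin_image_val (hw : ∀ v, 0 ≤ w v) {ε : ℝ} {D : Set V}
    {Y : Set D} (h : IsBalancedSeparator (G.induce D) (fun x => w x) ε Y) :
    IsSepWithin G w ε D (Subtype.val '' Y) := by
  intro c
  let f : G.induce (D \ Subtype.val '' Y) →g (G.induce D).induce (Set.univ \ Y) :=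
    ⟨fun x => ⟨⟨x, x.2.1⟩, trivial, fun hx => x.2.2 ⟨_, hx, rfl⟩⟩, id⟩
  have hsub : componentSet G (D \ Subtype.val '' Y) c ⊆
      Subtype.val '' componentSet (G.induce D) (Set.univ \ Y) (c.map f) := by
    rintro u ⟨hu, rfl⟩
    exact ⟨⟨u, hu.1⟩, ⟨(f ⟨u, hu⟩).2, (ConnectedComponent.map_mk f ⟨u, hu⟩).symm⟩,
      rfl⟩
  calc setWeight w (componentSet G (D \ Subtype.val '' Y) c)
      _ ≤ setWeight w (Subtype.val '' componentSet (G.induce D) (Set.univ \ Y) (c.map f)) :=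
        setWeight_mono hw hsub
      _ = _ := (setWeight_subtype_val _).symm
      _ ≤ ε := h _

/-- Breaking `G[D]` for the normalised weight `w / w(D)`. -/
lemma KBreakableGraph.exists_isSepWithin_half {k : ℕ} {D : Set V}
    (hD : KBreakableGraph (G.induce D) k) (hw : ∀ v, 0 ≤ w v) (hpos : 0 < setWeight w D) :
    ∃ (Z : Set V) (X : Finset V), X.card < k ∧ Z ⊆ closedNbhd G ↑X ∧
      IsSepWithin G w (setWeight w D / 2) D Z := by
  set t := setWeight w D
  have hwt : IsWeightFunction (fun x : D => w x / t) := by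
    refine ⟨fun x => ⟨div_nonneg (hw x) hpos.le,
      (div_le_one hpos).mpr (single_le_setWeight hw x.2)⟩, ?_⟩
    rw [← setWeight_univ, setWeight_subtype_val (w := fun v => w v / t),
      Subtype.coe_image_univ, setWeight_div, div_self hpos.ne']
  obtain ⟨Y, X, hXk, hYX, hY⟩ := hD _ hwt
  refine ⟨Subtype.val '' Y, X.image Subtype.val, Finset.card_image_le.trans_lt hXk,
    by simpa using image_val_subset_closedNbhd hYX, fun c => ?_⟩
  have hc := IsBalancedSeparator.isSepWithin_image_val (w := fun v => w v / t)
    (fun v => div_nonneg (hw v) hpos.le) hY c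
  rw [setWeight_div, div_le_iff₀ hpos] at hc
  linarith

lemma isSepWithin_union_biUnion (hw : ∀ v, 0 ≤ w v) {ε : ℝ} {A Y : Set V}
    (s : Finset (G.induce (A \ Y)).ConnectedComponent)
    (hlight : ∀ c ∉ s, setWeight w (componentSet G (A \ Y) c) ≤ ε)
    (Z : (G.induce (A \ Y)).ConnectedComponent → Set V)
    (hZ : ∀ c ∈ s, IsSepWithin G w ε (componentSet G (A \ Y) c) (Z c)) :
    IsSepWithin G w ε A (Y ∪ ⋃ c ∈ s, Z c) := by
  intro c
  have hsub : componentSet G (A \ (Y ∪ ⋃ c ∈ s, Z c)) c ⊆ A \ Y :=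
    (componentSet_subset c).trans (Set.sdiff_subset_sdiff_right Set.subset_union_left)
  obtain ⟨c', hc'⟩ := exists_componentSet_superset hsub
  by_cases hc's : c' ∈ s
  · have hsub' : componentSet G (A \ (Y ∪ ⋃ c ∈ s, Z c)) c ⊆
        componentSet G (A \ Y) c' \ Z c' := fun v hv =>
      ⟨hc' hv, fun hvZ => (componentSet_subset c hv).2 (Or.inr (Set.mem_biUnion hc's hvZ))⟩
    obtain ⟨c'', hc''⟩ := exists_componentSet_superset hsub'
    exact (setWeight_mono hw hc'').trans (hZ c' hc's c'')
  · exact (setWeight_mono hw hc').trans (hlight c' hc's)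

lemma IsBalancedSeparator.isBoostedSeparator_empty (hw : ∀ v, 0 ≤ w v) {ε : ℝ} {S : Set V}
    (h : IsBalancedSeparator G w ε S) : IsBoostedSeparator G w ε S ∅ :=
  fun _ _ => Or.inr <| IsSepWithin.of_diff_subset hw h
    fun _ hv => ⟨trivial, fun hvS => hv.2 ⟨hvS, hv.1⟩⟩

lemma alphaOn_empty : alphaOn G (∅ : Set V) = 0 := by
  simp [alphaOn]

end Weights

namespace GraphClass.KBreakable

variable {V : Type} [Fintype V] {G : SimpleGraph V} {w : V → ℝ} {𝓒 : GraphClass} {k : ℕ}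

lemma exists_union_balancedSeparator_succ (h𝓒 : 𝓒.KBreakable k) (hG : 𝓒 V G)
    (hw : IsWeightFunction w) {i : ℕ} {Y : Set V} (hY : IsBalancedSeparator G w (1 / 2 ^ i) Y) :
    ∃ (Z : Set V) (X : Finset V), X.card ≤ 2 ^ (i + 1) * (k - 1) ∧ Z ⊆ closedNbhd G ↑X ∧
      IsBalancedSeparator G w (1 / 2 ^ (i + 1)) (Y ∪ Z) := by
  have hw0 : ∀ v, 0 ≤ w v := fun v => (hw.1 v).1
  set ε : ℝ := 1 / 2 ^ (i + 1) with hε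
  set heavy := Finset.univ.filter fun c => ε < setWeight w (componentSet G (Set.univ \ Y) c)
  have hbreak : ∀ c, ∃ (Z : Set V) (X : Finset V), c ∈ heavy →
      X.card < k ∧ Z ⊆ closedNbhd G ↑X ∧
        IsSepWithin G w ε (componentSet G (Set.univ \ Y) c) Z := by
    intro c
    by_cases hc : c ∈ heavy
    · have hpos : 0 < setWeight w (componentSet G (Set.univ \ Y) c) :=
        lt_trans (by positivity) (Finset.mem_filter.mp hc).2
      obtain ⟨Z, X, hXk, hZX, hZ⟩ :=
        (h𝓒.2 _ _ (h𝓒.1 _ _ _ hG)).exists_isSepWithin_half hw0 hpos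
      have hhalf : setWeight w (componentSet G (Set.univ \ Y) c) / 2 ≤ ε :=
        calc _ ≤ 1 / 2 ^ i / 2 := by linarith [hY c]
          _ = ε := by rw [hε, pow_succ, div_div]
      exact ⟨Z, X, fun _ => ⟨hXk, hZX, fun c' => (hZ c').trans hhalf⟩⟩
    · exact ⟨∅, ∅, fun h => absurd h hc⟩
  choose Z X hZX using hbreak
  have hcard : heavy.card ≤ 2 ^ (i + 1) := by
    have h := card_mul_le_setWeight hw0 heavy fun c hc => (Finset.mem_filter.mp hc).2.le
    have h1 : setWeight w (Set.univ \ Y) ≤ 1 :=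
      (setWeight_mono hw0 (Set.subset_univ _)).trans (setWeight_univ.trans_le hw.2)
    rw [hε, mul_one_div, div_le_iff₀ (by positivity)] at h
    exact_mod_cast h.trans (mul_le_of_le_one_left (by positivity) h1)
  have hlight : ∀ c ∉ heavy, setWeight w (componentSet G (Set.univ \ Y) c) ≤ ε :=
    fun c hc => not_lt.mp fun h => hc (Finset.mem_filter.mpr ⟨Finset.mem_univ _, h⟩)
  refine ⟨⋃ c ∈ heavy, Z c, heavy.biUnion X, ?_, ?_,
    isSepWithin_union_biUnion hw0 heavy hlight Z fun c hc => (hZX c hc).2.2⟩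
  · calc (heavy.biUnion X).card ≤ ∑ c ∈ heavy, (X c).card := Finset.card_biUnion_le
      _ ≤ ∑ _c ∈ heavy, (k - 1) :=
        Finset.sum_le_sum fun c hc => Nat.le_sub_one_of_lt (hZX c hc).1
      _ = heavy.card * (k - 1) := by rw [Finset.sum_const, smul_eq_mul]
      _ ≤ 2 ^ (i + 1) * (k - 1) := Nat.mul_le_mul_right _ hcard
  · exact Set.iUnion₂_subset fun c hc => (hZX c hc).2.1.trans
      (closedNbhd_mono (Finset.coe_subset.mpr (Finset.subset_biUnion_of_mem X hc)))

theorem exists_balancedSeparator_pow (h𝓒 : 𝓒.KBreakable k) (hG : 𝓒 V G)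
    (hw : IsWeightFunction w) (i : ℕ) :
    ∃ (Y : Set V) (X : Finset V), X.card ≤ 2 ^ (i + 1) * (k - 1) ∧ Y ⊆ closedNbhd G ↑X ∧
      IsBalancedSeparator G w (1 / 2 ^ i) Y := by
  induction i with
  | zero =>
    refine ⟨∅, ∅, by simp, Set.empty_subset _, fun c => ?_⟩
    calc _ ≤ setWeight w Set.univ := setWeight_mono (fun v => (hw.1 v).1) (Set.subset_univ _)
      _ ≤ 1 / 2 ^ 0 := by simpa [setWeight_univ] using hw.2
  | succ i ih =>
    obtain ⟨Y, X, hX, hYX, hY⟩ := ih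
    obtain ⟨Z, X', hX', hZX', hYZ⟩ := h𝓒.exists_union_balancedSeparator_succ hG hw hY
    refine ⟨Y ∪ Z, X ∪ X', ?_, Set.union_subset ?_ ?_, hYZ⟩
    · have h2 : 2 ^ (i + 1 + 1) * (k - 1) = 2 ^ (i + 1) * (k - 1) + 2 ^ (i + 1) * (k - 1) := by
        ring
      have := Finset.card_union_le X X'
      omega
    · exact hYX.trans (closedNbhd_mono (by simp))
    · exact hZX'.trans (closedNbhd_mono (by simp))

end GraphClass.KBreakable

/-- every `k`-breakable class is `(2^{i+1}(k-1), 0, 1/2^i)`-breakable. -/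
theorem stmt_11 :
    ∀ k : ℕ, 2 ≤ k → ∀ i : ℕ, 0 < i →
    ∀ 𝓒 : GraphClass, 𝓒.KBreakable k →
      𝓒.KFEBreakable (2 ^ (i + 1) * (k - 1)) (fun _ => 0) ((1 : ℝ) / 2 ^ i) := by
  intro k _ i _ 𝓒 h𝓒
  refine ⟨h𝓒.1, fun V _ G hG w hw => ?_⟩
  obtain ⟨S, X, hX, hSX, hS⟩ := h𝓒.exists_balancedSeparator_pow hG hw i
  exact ⟨S, ∅, X, hX, hSX, hS.isBoostedSeparator_empty fun v => (hw.1 v).1,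
    by simp [alphaOn_empty]⟩

end ArxivFormal
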